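/- There is an absolute constant C such that for all α > 0 and all β > 0, |F(α, β)| ≤ C/α. -/

import Mathlib

open MeasureTheory

/-- The Gaussian weight `Γ(x) = exp(−πx²)`. -/
noncomputable def gauss (x : ℝ) : ℝ := Real.exp (-Real.pi * x ^ 2)

/-- `F(α,β) = ∫_{−∞}^{∞} Γ(x) e(−βx³ − αx) dx`, where `e(x) = exp(2πix)`. -/
noncomputable def Fab (α β : ℝ) : ℂ :=
  ∫ x : ℝ, (gauss x : ℂ) * Complex.exp (2 * Real.pi * Complex.I * ((-β * x ^ 3 - α * x : ℝ) : ℂ))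

open Real Filter Set Topology

/-!
Write the phase as `φ(x) = 2π(−βx³ − αx)`, so that `|φ'(x)| = 2π(3βx² + α) ≥ 2πα`, and the
Gaussian as `Γ = w·|φ'|` with `w = Γ/|φ'|`. One integration by parts against `e^{iφ}` bounds
`|F(α,β)|` by the total variation `∫|w'|` of `w`. Both `Γ` and `1/|φ'|` are even, positive and
decreasing in `|x|`, so `w` is unimodal with peak at `0` and vanishes at `±∞`; its total variation
is therefore `2w(0) = 1/(πα)`, and `C = 1/π` works.
-/

theorem integrableOn_Iic_deriv_of_nonneg' {g g' : ℝ → ℝ} {a l : ℝ}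
    (hderiv : ∀ x ∈ Iic a, HasDerivAt g (g' x) x) (g'pos : ∀ x ∈ Iio a, 0 ≤ g' x)
    (hg : Tendsto g atBot (𝓝 l)) : IntegrableOn g' (Iic a) := by
  have hreflect : IntegrableOn (fun x ↦ -g' (-x)) (Ioi (-a)) := by
    refine integrableOn_Ioi_deriv_of_nonpos' (g := fun x ↦ g (-x)) (fun x hx ↦ ?_)
      (fun x hx ↦ neg_nonpos.mpr (g'pos _ (show -x < a from neg_lt.mp hx)))
      (hg.comp tendsto_neg_atTop_atBot)
    simpa [Function.comp_def] using
      (hderiv (-x) (show -x ≤ a from neg_le.mp hx)).comp x (hasDerivAt_neg x)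
  have h := (Measure.measurePreserving_neg volume).integrableOn_comp_preimage
    (Homeomorph.neg ℝ).measurableEmbedding (f := g') (s := Iio a)
  rw [integrableOn_Iic_iff_integrableOn_Iio, ← h]
  simpa [Function.comp_def] using hreflect.neg

theorem integrable_deriv_of_unimodal {w w' : ℝ → ℝ} {a lb lt : ℝ}
    (hw : ∀ x, HasDerivAt w (w' x) x) (hinc : ∀ x < a, 0 ≤ w' x) (hdec : ∀ x > a, w' x ≤ 0)
    (hbot : Tendsto w atBot (𝓝 lb)) (htop : Tendsto w atTop (𝓝 lt)) : Integrable w' := by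
  rw [← integrableOn_univ, ← Iic_union_Ioi (a := a), integrableOn_union]
  exact ⟨integrableOn_Iic_deriv_of_nonneg' (fun x _ ↦ hw x) hinc hbot,
    integrableOn_Ioi_deriv_of_nonpos' (fun x _ ↦ hw x) hdec htop⟩

theorem integral_abs_deriv_of_unimodal {w w' : ℝ → ℝ} {a lb lt : ℝ}
    (hw : ∀ x, HasDerivAt w (w' x) x) (hinc : ∀ x < a, 0 ≤ w' x) (hdec : ∀ x > a, w' x ≤ 0)
    (hbot : Tendsto w atBot (𝓝 lb)) (htop : Tendsto w atTop (𝓝 lt)) :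
    ∫ x, |w' x| = (w a - lb) + (w a - lt) := by
  have hint := integrable_deriv_of_unimodal hw hinc hdec hbot htop
  have hleft : ∫ x in Iic a, |w' x| = w a - lb := by
    rw [← integral_Iic_of_hasDerivAt_of_tendsto' (fun x _ ↦ hw x) hint.integrableOn hbot]
    refine setIntegral_congr_ae measurableSet_Iic ?_
    filter_upwards [Measure.ae_ne volume a] with x hne hx
    exact abs_of_nonneg (hinc x (lt_of_le_of_ne hx hne))
  have hright : ∫ x in Ioi a, |w' x| = w a - lt := by
    rw [← neg_sub,
      ← integral_Ioi_of_hasDerivAt_of_tendsto' (fun x _ ↦ hw x) hint.integrableOn htop,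
      ← integral_neg]
    exact setIntegral_congr_fun measurableSet_Ioi fun x hx ↦ abs_of_nonpos (hdec x hx)
  rw [← intervalIntegral.integral_Iic_add_Ioi hint.abs.integrableOn hint.abs.integrableOn,
    hleft, hright]

theorem norm_integral_mul_deriv_mul_exp_le {w w' φ φ' : ℝ → ℝ}
    (hw : ∀ x, HasDerivAt w (w' x) x) (hφ : ∀ x, HasDerivAt φ (φ' x) x)
    (hw'int : Integrable w') (hwφ'int : Integrable fun x ↦ w x * φ' x)
    (hbot : Tendsto w atBot (𝓝 0)) (htop : Tendsto w atTop (𝓝 0)) :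
    ‖∫ x, ((w x * φ' x : ℝ) : ℂ) * Complex.exp (φ x * Complex.I)‖ ≤ ∫ x, |w' x| := by
  set e : ℝ → ℂ := fun x ↦ Complex.exp (φ x * Complex.I)
  have he_meas : AEStronglyMeasurable e := by
    have : Continuous φ := continuous_iff_continuousAt.mpr fun x ↦ (hφ x).continuousAt
    fun_prop
  have he_norm (x : ℝ) : ‖e x‖ = 1 := Complex.norm_exp_ofReal_mul_I (φ x)
  have he_bdd : ∀ᵐ x, ‖e x‖ ≤ 1 := ae_of_all _ fun x ↦ (he_norm x).le
  have hv (x : ℝ) : HasDerivAt (fun x ↦ -Complex.I * e x) (φ' x * e x) x := by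
    have := (((hφ x).ofReal_comp).mul_const Complex.I).cexp.const_mul (-Complex.I)
    change HasDerivAt _ (-Complex.I * (e x * (φ' x * Complex.I))) x at this
    refine this.congr_deriv ?_
    linear_combination -(φ' x * e x) * Complex.I_sq
  have hboundary {l : Filter ℝ} (hl : Tendsto w l (𝓝 0)) :
      Tendsto (fun x ↦ (w x : ℂ) * (-Complex.I * e x)) l (𝓝 0) := by
    refine squeeze_zero_norm (fun x ↦ le_of_eq ?_) (by simpa using hl.norm)
    simp [he_norm]
  have hibp := integral_mul_deriv_eq_deriv_mul (u := fun x ↦ (w x : ℂ))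
    (fun x _ ↦ (hw x).ofReal_comp) (fun x _ ↦ hv x)
    (by simpa [mul_assoc, Pi.mul_def] using hwφ'int.ofReal.mul_bdd he_meas he_bdd)
    (hw'int.ofReal.mul_bdd (he_meas.const_mul _) (by simpa using he_bdd))
    (hboundary hbot) (hboundary htop)
  calc ‖∫ x, ((w x * φ' x : ℝ) : ℂ) * e x‖
      = ‖∫ x, (w' x : ℂ) * (-Complex.I * e x)‖ := by
        simpa [mul_assoc] using congrArg norm hibp
    _ ≤ ∫ x, ‖(w' x : ℂ) * (-Complex.I * e x)‖ := norm_integral_le_integral_norm _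
    _ = ∫ x, |w' x| := by simp [he_norm]

theorem hasDerivAt_gauss (x : ℝ) : HasDerivAt gauss (-(2 * π * x) * gauss x) x := by
  have h := ((hasDerivAt_pow 2 x).const_mul (-π)).exp
  refine h.congr_deriv ?_
  simp only [gauss]
  ring

theorem tendsto_gauss_cocompact : Tendsto gauss (cocompact ℝ) (𝓝 0) :=
  (tendsto_rpow_abs_mul_exp_neg_mul_sq_cocompact pi_pos 0).congr fun x ↦ by simp [gauss]

theorem integrable_gauss : Integrable gauss := integrable_exp_neg_mul_sq pi_pos

noncomputable def cubicPhase (α β x : ℝ) : ℝ := 2 * π * (-β * x ^ 3 - α * x)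

noncomputable def phaseRate (α β x : ℝ) : ℝ := 2 * π * (3 * β * x ^ 2 + α)

noncomputable def gaussOverRate (α β x : ℝ) : ℝ := gauss x / phaseRate α β x

noncomputable def gaussOverRateDeriv (α β x : ℝ) : ℝ :=
  -x * gaussOverRate α β x * (2 * π + 12 * π * β / phaseRate α β x)

section

variable {α β : ℝ}

theorem hasDerivAt_cubicPhase (x : ℝ) : HasDerivAt (cubicPhase α β) (-phaseRate α β x) x := by
  have h := (((hasDerivAt_pow 3 x).const_mul (-β)).sub ((hasDerivAt_id x).const_mul α)).const_mul
    (2 * π)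
  refine h.congr_deriv ?_
  simp only [phaseRate]
  ring

theorem two_pi_mul_le_phaseRate (hβ : 0 ≤ β) (x : ℝ) : 2 * π * α ≤ phaseRate α β x := by
  have := pi_pos
  unfold phaseRate
  nlinarith [mul_nonneg hβ (sq_nonneg x)]

theorem phaseRate_pos (hα : 0 < α) (hβ : 0 ≤ β) (x : ℝ) : 0 < phaseRate α β x :=
  lt_of_lt_of_le (by positivity) (two_pi_mul_le_phaseRate hβ x)

theorem gaussOverRate_mul_phaseRate (hα : 0 < α) (hβ : 0 ≤ β) (x : ℝ) :
    gaussOverRate α β x * phaseRate α β x = gauss x :=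
  div_mul_cancel₀ _ (phaseRate_pos hα hβ x).ne'

theorem gaussOverRate_nonneg (hα : 0 < α) (hβ : 0 ≤ β) (x : ℝ) : 0 ≤ gaussOverRate α β x :=
  div_nonneg (exp_pos _).le (phaseRate_pos hα hβ x).le

theorem hasDerivAt_gaussOverRate (hα : 0 < α) (hβ : 0 ≤ β) (x : ℝ) :
    HasDerivAt (gaussOverRate α β) (gaussOverRateDeriv α β x) x := by
  have hR : HasDerivAt (phaseRate α β) (2 * π * (3 * β * (2 * x))) x := by
    have h := (((hasDerivAt_pow 2 x).const_mul (3 * β)).add_const α).const_mul (2 * π)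
    refine h.congr_deriv ?_
    norm_num
  have hR0 := (phaseRate_pos hα hβ x).ne'
  refine ((hasDerivAt_gauss x).div hR hR0).congr_deriv ?_
  simp only [gaussOverRateDeriv, gaussOverRate]
  field_simp
  simp only [phaseRate]
  ring

theorem gaussOverRateDeriv_nonneg (hα : 0 < α) (hβ : 0 ≤ β) {x : ℝ} (hx : x ≤ 0) :
    0 ≤ gaussOverRateDeriv α β x := by
  have := phaseRate_pos hα hβ x
  have := pi_pos
  unfold gaussOverRateDeriv
  exact mul_nonneg (mul_nonneg (by linarith) (gaussOverRate_nonneg hα hβ x)) (by positivity)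

theorem gaussOverRateDeriv_nonpos (hα : 0 < α) (hβ : 0 ≤ β) {x : ℝ} (hx : 0 ≤ x) :
    gaussOverRateDeriv α β x ≤ 0 := by
  have := phaseRate_pos hα hβ x
  have := pi_pos
  unfold gaussOverRateDeriv
  exact mul_nonpos_of_nonpos_of_nonneg
    (mul_nonpos_of_nonpos_of_nonneg (by linarith) (gaussOverRate_nonneg hα hβ x)) (by positivity)

theorem tendsto_gaussOverRate (hα : 0 < α) (hβ : 0 ≤ β) {l : Filter ℝ}
    (hl : l ≤ cocompact ℝ) : Tendsto (gaussOverRate α β) l (𝓝 0) := by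
  refine squeeze_zero (gaussOverRate_nonneg hα hβ) (fun x ↦ ?_)
    (by simpa using (tendsto_gauss_cocompact.mono_left hl).div_const (2 * π * α))
  exact div_le_div_of_nonneg_left (exp_pos _).le (by positivity) (two_pi_mul_le_phaseRate hβ x)

theorem Fab_eq_neg_integral (hα : 0 < α) (hβ : 0 ≤ β) :
    Fab α β = -∫ x, ((gaussOverRate α β x * -phaseRate α β x : ℝ) : ℂ) *
      Complex.exp (cubicPhase α β x * Complex.I) := by
  rw [Fab, ← integral_neg]
  congr 1 with x
  rw [mul_neg, gaussOverRate_mul_phaseRate hα hβ, cubicPhase]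
  push_cast
  ring_nf

end

theorem stmt7 :
    ∃ C : ℝ, ∀ α β : ℝ, 0 < α → 0 < β → ‖Fab α β‖ ≤ C / α := by
  refine ⟨π⁻¹, fun α β hα hβ ↦ ?_⟩
  have hw := hasDerivAt_gaussOverRate hα hβ.le
  have hinc (x : ℝ) (hx : x < 0) := gaussOverRateDeriv_nonneg hα hβ.le hx.le
  have hdec (x : ℝ) (hx : x > 0) := gaussOverRateDeriv_nonpos hα hβ.le hx.le
  have hbot := tendsto_gaussOverRate hα hβ.le atBot_le_cocompact
  have htop := tendsto_gaussOverRate hα hβ.le atTop_le_cocompact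
  have hamp : Integrable fun x ↦ gaussOverRate α β x * -phaseRate α β x := by
    simpa [gaussOverRate_mul_phaseRate hα hβ.le] using integrable_gauss.neg
  calc ‖Fab α β‖
      ≤ ∫ x, |gaussOverRateDeriv α β x| := by
        rw [Fab_eq_neg_integral hα hβ.le, norm_neg]
        exact norm_integral_mul_deriv_mul_exp_le hw hasDerivAt_cubicPhase
          (integrable_deriv_of_unimodal hw hinc hdec hbot htop) hamp hbot htop
    _ = 2 * gaussOverRate α β 0 := by
        rw [integral_abs_deriv_of_unimodal hw hinc hdec hbot htop]
        ring
    _ = π⁻¹ / α := by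
        simp only [gaussOverRate, phaseRate, gauss]
        field_simp
        norm_num
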